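/- arXiv:2104.01730 — 3 statements merged into one kernel-verified Lean document; each statement's English description precedes it below -/
import Mathlib

section
/- Suppose f : X → ℝ is L-Lipschitz, nonnegative, with global minimum f* attained at some x* ∈ X, samples x₁,...,x_t ∈ X, and 0 ≤ ρ < 1. Define the removable parameter space X_R(t) = ⋃_{j=1..t} B(x_j, r_j) where r_j = (f(x_j) − ρ·min_{i=1..t} f(x_i))/L and B(x_j, r_j) = {x ∈ X : ‖x − x_j‖₂ < r_j}. If X_R(t) = X (the samples' balls cover all of X), then ρ·min_{i=1..t} f(x_i) ≤ f* ≤ min_{i=1..t} f(x_i). -/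
/-- BPGrad lower & upper bound theorem: if the removable parameter space
(union of the balls around the samples) covers all of `X`, then the global
minimum `f*` is sandwiched between `ρ · min_i f(x_i)` and `min_i f(x_i)`. -/
theorem bpgrad_bounds_of_cover
    {d : ℕ} (X : Set (EuclideanSpace ℝ (Fin d)))
    (f : EuclideanSpace ℝ (Fin d) → ℝ) (L : ℝ) (hL : 0 < L)
    (hLip : ∀ x ∈ X, ∀ y ∈ X, |f x - f y| ≤ L * ‖x - y‖)
    (hnonneg : ∀ x ∈ X, 0 ≤ f x)
    (xstar : EuclideanSpace ℝ (Fin d)) (hxstar : xstar ∈ X)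
    (hmin : ∀ x ∈ X, f xstar ≤ f x)
    (ρ : ℝ) (hρ0 : 0 ≤ ρ) (hρ1 : ρ < 1)
    (t : ℕ) (ht : 1 ≤ t)
    (x : ℕ → EuclideanSpace ℝ (Fin d)) (hx : ∀ i ∈ Finset.Icc 1 t, x i ∈ X)
    (fmin : ℝ)
    (hfmin : fmin = (Finset.Icc 1 t).inf' (Finset.nonempty_Icc.mpr ht)
      (fun i => f (x i)))
    (hcover : ∀ y ∈ X, ∃ j ∈ Finset.Icc 1 t,
      ‖y - x j‖ < (f (x j) - ρ * fmin) / L) :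
    ρ * fmin ≤ f xstar ∧ f xstar ≤ fmin := by
  have hupper : f xstar ≤ fmin := by
    rw [hfmin]
    apply Finset.le_inf'
    intro i hi
    exact hmin _ (hx i hi)
  refine ⟨?_, hupper⟩
  obtain ⟨j, hj, hball⟩ := hcover xstar hxstar
  have h1 : f (x j) - f xstar ≤ L * ‖x j - xstar‖ :=
    (abs_le.mp (hLip (x j) (hx j hj) xstar hxstar)).2
  have hnorm : ‖x j - xstar‖ = ‖xstar - x j‖ := by rw [norm_sub_rev]
  have h2 : L * ‖xstar - x j‖ < f (x j) - ρ * fmin := by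
    have := mul_lt_mul_of_pos_left hball hL
    rwa [mul_div_cancel₀ _ (ne_of_gt hL)] at this
  have := h1.trans_lt (by rw [hnorm]; exact h2)
  linarith
end

section
/- Let f be L-Lipschitz (L > 0), and let x_{t+1} = x_t − η_t·∇f(x_t)/‖∇f(x_t)‖₂, where η_t = (f(x_t) − ρ·min_{i=1..t} f(x_i))/L. If ⟨x_i − x_t, ∇f(x_t)/‖∇f(x_t)‖₂⟩ ≥ (f(x_i) − f(x_t))/L for all i = 1,...,t, then for all i = 1,...,t: ‖x_i − x_{t+1}‖₂ ≥ (f(x_i) − ρ·min_{j=1..t} f(x_j))/L, i.e., x_{t+1} lies outside the removable parameter space X_R(t). -/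
open RealInnerProductSpace

/-- Global property preservation: if the new sample
`x_{t+1} = x_t - η_t · ∇f(x_t)/‖∇f(x_t)‖` with
`η_t = (f(x_t) - ρ·min_{i≤t} f(x_i))/L` and the angle condition
`⟨x_i - x_t, ∇f(x_t)/‖∇f(x_t)‖⟩ ≥ (f(x_i) - f(x_t))/L` holds for every
previous sample, then `x_{t+1}` lies outside the removable parameter space,
i.e. `‖x_i - x_{t+1}‖ ≥ (f(x_i) - ρ·min_{j≤t} f(x_j))/L` for all `i ≤ t`. -/
theorem bpgrad_global_property_preservation
    {d : ℕ}
    (f : EuclideanSpace ℝ (Fin d) → ℝ) (L : ℝ) (hL : 0 < L)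
    (hLip : ∀ x y, |f x - f y| ≤ L * ‖x - y‖)
    (hnonneg : ∀ x, 0 ≤ f x)
    (hdiff : Differentiable ℝ f)
    (ρ : ℝ) (hρ0 : 0 ≤ ρ) (hρ1 : ρ < 1)
    (t : ℕ) (ht : 1 ≤ t)
    (x : ℕ → EuclideanSpace ℝ (Fin d))
    (hgrad : gradient f (x t) ≠ 0)
    (g : EuclideanSpace ℝ (Fin d))
    (hg : g = ‖gradient f (x t)‖⁻¹ • gradient f (x t))
    (fmin : ℝ)
    (hfmin : fmin = (Finset.Icc 1 t).inf' (Finset.nonempty_Icc.mpr ht)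
      (fun i => f (x i)))
    (η : ℝ) (hη : η = (f (x t) - ρ * fmin) / L)
    (hangle : ∀ i ∈ Finset.Icc 1 t, ⟪x i - x t, g⟫ ≥ (f (x i) - f (x t)) / L) :
    ∀ i ∈ Finset.Icc 1 t,
      ‖x i - (x t - η • g)‖ ≥ (f (x i) - ρ * fmin) / L := by
  intro i hi
  have hgn : ‖g‖ = 1 := by
    rw [hg, norm_smul, norm_inv, norm_norm]
    exact inv_mul_cancel₀ (norm_ne_zero_iff.mpr hgrad)
  have hfmin_le : fmin ≤ f (x t) := by
    rw [hfmin]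
    exact Finset.inf'_le _ (Finset.mem_Icc.mpr ⟨ht, le_rfl⟩)
  have hfmin_nonneg : 0 ≤ fmin := by
    obtain ⟨j, hj, hje⟩ := Finset.exists_mem_eq_inf' (Finset.nonempty_Icc.mpr ht)
      (fun i => f (x i))
    rw [hfmin, hje]
    exact hnonneg _
  have hη0 : 0 ≤ η := by
    rw [hη]
    apply div_nonneg _ hL.le
    nlinarith
  have hangle_i := hangle i hi
  have hδ : |(f (x i) - f (x t)) / L| ≤ ‖x i - x t‖ := by
    rw [abs_div, abs_of_pos hL, div_le_iff₀ hL, mul_comm]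
    exact hLip (x i) (x t)
  have key : x i - (x t - η • g) = (x i - x t) + η • g := by abel
  rw [key]
  have hexp : ‖(x i - x t) + η • g‖ ^ 2
      = ‖x i - x t‖ ^ 2 + 2 * (η * ⟪x i - x t, g⟫) + η ^ 2 := by
    rw [norm_add_sq_real, real_inner_smul_right, norm_smul, hgn]
    simp [mul_pow, sq_abs]
  have hc : (f (x i) - ρ * fmin) / L = (f (x i) - f (x t)) / L + η := by
    rw [hη]
    field_simp
    ring
  rw [hc]
  set δ := (f (x i) - f (x t)) / L with hδdef
  have habs : |δ| ≤ ‖x i - x t‖ := hδ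
  have h1 : δ ≤ ‖x i - x t‖ := (abs_le.mp (abs_abs δ ▸ habs)).2 |>.trans le_rfl
  have h2 : δ ^ 2 ≤ ‖x i - x t‖ ^ 2 := by
    nlinarith [abs_nonneg δ, habs, sq_abs δ]
  nlinarith [norm_nonneg ((x i - x t) + η • g), sq_nonneg (‖(x i - x t) + η • g‖ - (δ + η))]
end

section
/- Combining separation and packing: let f : X → ℝ be nonnegative and L-Lipschitz on a bounded measurable set X ⊆ ℝ^d of volume V_X, let ρ ∈ [0,1), and let x₁,...,x_T be any sequence such that each x_{t+1} lies outside X_R(t) (i.e., ‖x_{t+1} − x_j‖₂ ≥ (f(x_j) − ρ·min_{i≤t} f(x_i))/L for all j ≤ t). If f_min = min_{i=1..T} f(x_i) > 0 and all balls B(x_t, (1−ρ)f_min/(2L)) are contained in a set of volume V_X, then T ≤ (2L/((1−ρ)f_min))^d · V_X / C with C the volume of the unit d-ball; in particular, the sampling procedure terminates after finitely many iterations. -/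
open MeasureTheory

/-- Convergence within finitely many samples: if each new BPGrad sample lies
outside the removable parameter space of the previous samples,
`f_min = min_{i≤T} f(x_i) > 0`, and the balls of radius `(1-ρ)f_min/(2L)`
around the samples are contained in a measurable set `S` of volume `V_X`,
then `T ≤ (2L/((1-ρ)f_min))^d · V_X / C`, with `C` the volume of the unit
`d`-ball. -/
theorem bpgrad_finite_sample_bound
    {d : ℕ} (hd : 0 < d)
    (f : EuclideanSpace ℝ (Fin d) → ℝ) (L : ℝ) (hL : 0 < L)
    (hLip : ∀ x y, |f x - f y| ≤ L * ‖x - y‖)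
    (hnonneg : ∀ x, 0 ≤ f x)
    (ρ : ℝ) (hρ0 : 0 ≤ ρ) (hρ1 : ρ < 1)
    (T : ℕ) (hT : 1 ≤ T)
    (x : ℕ → EuclideanSpace ℝ (Fin d))
    (hsep : ∀ t j : ℕ, (hj : 1 ≤ j) → (hjt : j ≤ t) → t + 1 ≤ T →
      ‖x (t + 1) - x j‖ ≥
        (f (x j) - ρ * (Finset.Icc 1 t).inf'
          (Finset.nonempty_Icc.mpr (le_trans hj hjt)) (fun i => f (x i))) / L)
    (fmin : ℝ)
    (hfmin : fmin = (Finset.Icc 1 T).inf' (Finset.nonempty_Icc.mpr hT)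
      (fun i => f (x i)))
    (hfminpos : 0 < fmin)
    (S : Set (EuclideanSpace ℝ (Fin d))) (hS : MeasurableSet S)
    (VX : ℝ) (hVX : VX = (volume S).toReal) (hVfin : volume S ≠ ⊤)
    (hballs : ∀ t ∈ Finset.Icc 1 T,
      Metric.ball (x t) ((1 - ρ) * fmin / (2 * L)) ⊆ S)
    (C : ℝ) (hC : C = Real.pi ^ ((d : ℝ) / 2) / Real.Gamma ((d : ℝ) / 2 + 1)) :
    (T : ℝ) ≤ (2 * L / ((1 - ρ) * fmin)) ^ d * VX / C := by
  haveI : Nonempty (Fin d) := Fin.pos_iff_nonempty.mp hd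
  set r : ℝ := (1 - ρ) * fmin / (2 * L) with hr_def
  have hρ' : (0:ℝ) < 1 - ρ := by linarith
  have hr : 0 < r := by positivity
  -- separation: distinct sample points are at distance ≥ 2r
  have sep : ∀ i ∈ Finset.Icc 1 T, ∀ j ∈ Finset.Icc 1 T, i < j →
      2 * r ≤ dist (x i) (x j) := by
    intro i hi j hj hij
    simp only [Finset.mem_Icc] at hi hj
    obtain ⟨hi1, hiT⟩ := hi
    obtain ⟨hj1, hjT⟩ := hj
    obtain ⟨t, rfl⟩ : ∃ t, j = t + 1 := ⟨j - 1, by omega⟩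
    have hit : i ≤ t := by omega
    have key := hsep t i hi1 hit hjT
    set m := (Finset.Icc 1 t).inf' (Finset.nonempty_Icc.mpr (le_trans hi1 hit))
      (fun i => f (x i)) with hm
    have hm_le : m ≤ f (x i) :=
      Finset.inf'_le _ (Finset.mem_Icc.mpr ⟨hi1, hit⟩)
    have hfmin_le : fmin ≤ f (x i) := by
      rw [hfmin]
      exact Finset.inf'_le _ (Finset.mem_Icc.mpr ⟨hi1, hiT⟩)
    have h1 : (1 - ρ) * fmin ≤ f (x i) - ρ * m := by nlinarith
    have h2 : (1 - ρ) * fmin / L ≤ (f (x i) - ρ * m) / L := by gcongr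
    have h3 : 2 * r = (1 - ρ) * fmin / L := by
      rw [hr_def]; field_simp
    rw [dist_comm, dist_eq_norm, h3]
    exact le_trans h2 key
  -- pairwise disjoint balls
  have hdisj : (↑(Finset.Icc 1 T) : Set ℕ).PairwiseDisjoint
      (fun i => Metric.ball (x i) r) := by
    intro i hi j hj hij
    rcases lt_or_gt_of_ne hij with h | h
    · exact Metric.ball_disjoint_ball (by
        have := sep i hi j hj h; linarith)
    · exact Metric.ball_disjoint_ball (by
        have := sep j hj i hi h; rw [dist_comm] at this; linarith)
  -- measure bound
  have hsum : ∑ i ∈ Finset.Icc 1 T, volume (Metric.ball (x i) r) ≤ volume S := by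
    rw [← measure_biUnion_finset hdisj (fun i _ => measurableSet_ball)]
    exact measure_mono (Set.iUnion₂_subset fun i hi => hballs i hi)
  have hcard : (Finset.Icc 1 T).card = T := by
    rw [Nat.card_Icc]; omega
  set c : ℝ := Real.sqrt Real.pi ^ d / Real.Gamma ((d : ℝ) / 2 + 1) with hc_def
  have hΓpos : 0 < Real.Gamma ((d : ℝ) / 2 + 1) :=
    Real.Gamma_pos_of_pos (by positivity)
  have hc_pos : 0 < c := by
    apply div_pos _ hΓpos
    exact pow_pos (Real.sqrt_pos.mpr Real.pi_pos) d
  have hvol : ∀ i : ℕ, volume (Metric.ball (x i) r) =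
      ENNReal.ofReal r ^ d * ENNReal.ofReal c := by
    intro i
    rw [EuclideanSpace.volume_ball, Fintype.card_fin]
  have hsum' : (T : ENNReal) * (ENNReal.ofReal r ^ d * ENNReal.ofReal c) ≤
      volume S := by
    calc (T : ENNReal) * (ENNReal.ofReal r ^ d * ENNReal.ofReal c)
        = ∑ i ∈ Finset.Icc 1 T, volume (Metric.ball (x i) r) := by
          simp [hvol, Finset.sum_const, hcard, mul_comm]
      _ ≤ volume S := hsum
  have hreal : (T : ℝ) * (r ^ d * c) ≤ VX := by
    have := ENNReal.toReal_mono hVfin hsum'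
    rw [hVX]
    convert this using 1
    rw [ENNReal.toReal_mul, ENNReal.toReal_mul, ENNReal.toReal_pow,
      ENNReal.toReal_ofReal hr.le, ENNReal.toReal_ofReal hc_pos.le]
    simp
  -- C = c
  have hCc : C = c := by
    rw [hC, hc_def]
    congr 1
    rw [Real.sqrt_eq_rpow, ← Real.rpow_natCast (Real.pi ^ ((1:ℝ)/2)) d,
      ← Real.rpow_mul Real.pi_pos.le]
    ring_nf
  -- final algebra
  have hinv : 2 * L / ((1 - ρ) * fmin) = r⁻¹ := by
    rw [hr_def]; field_simp
  rw [hCc, hinv]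
  have hrd : 0 < r ^ d := pow_pos hr d
  rw [le_div_iff₀ hc_pos, inv_pow, inv_mul_eq_div, le_div_iff₀ hrd]
  calc (T : ℝ) * c * r ^ d = (T : ℝ) * (r ^ d * c) := by ring
    _ ≤ VX := hreal
end
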